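/- arXiv:0811.4214 — 4 statements merged into one kernel-verified Lean document; each statement's English description precedes it below -/
import Mathlib

section
/- Let r ≥ 0 be an integer, ε > 0, and let (h_j) be 2K-periodic positive element sizes with h_j ≥ (2r+1)ε for all j (non-overlapping clusters). Define the 2K-periodic tridiagonal matrix M by M_{j,j−1} = ½ r(r+1) ε/h_j, M_{j,j+1} = ½ r(r+1) ε/h_{j+1}, M_{j,j} = (2r+1) − ½ r(r+1) ε (1/h_j + 1/h_{j+1}), and M_{j,k} = 0 otherwise (indices modulo 2K). Then M is strictly row-diagonally dominant with M_{jj} − Σ_{k≠j} |M_{jk}| > r for every j; hence M is invertible, and the operator norm of M⁻¹ on ℓ^∞ satisfies ‖M⁻¹‖_{ℓ∞} ≤ 1/r if r ≥ 1 and ‖M⁻¹‖_{ℓ∞} ≤ 1 if r = 0. -/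
/-!
At an index `i` where `|x|` is maximal, the off-diagonal terms of `(M x)_i` are at most their
coefficients times `|x_i|`, so `|(M x)_i|` is at least the dominance margin
`M_ii - M_{i,i-1} - M_{i,i+1}` times `|x_i|`: a discrete maximum principle. Non-overlap gives
`ε / h_j ≤ 1 / (2r+1)`, so the margin is at least `2r+1 - 2r(r+1)/(2r+1) > r`. Periodic sequences
attain their maximum, which yields the `ℓ∞` bounds and injectivity of `M` on the
finite-dimensional space of `2K`-periodic sequences, hence bijectivity there.
-/

open Function

def periodicSubmodule (R : Type*) {α M : Type*} [Add α] [Semiring R] [AddCommMonoid M]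
    [Module R M] (c : α) : Submodule R (α → M) where
  carrier := {f | Periodic f c}
  add_mem' hf hg := hf.add hg
  zero_mem' _ := rfl
  smul_mem' a _ hf := hf.smul a

theorem finiteDimensional_periodicSubmodule (K : Type*) [Field K] {c : ℤ} (hc : 0 < c) :
    FiniteDimensional K (periodicSubmodule K c : Submodule K (ℤ → K)) := by
  refine .of_injective
    (LinearMap.funLeft K K ((↑) : Set.Ico 0 c → ℤ) ∘ₗ (periodicSubmodule K c).subtype)
    fun f g hfg => Subtype.ext (funext fun j => ?_)
  obtain ⟨i, hi, hji⟩ := (f.2.sub g.2).exists_mem_Ico₀ hc j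
  have hfg_i : (f : ℤ → K) i = (g : ℤ → K) i := congrFun hfg ⟨i, hi⟩
  exact sub_eq_zero.mp (hji.trans (sub_eq_zero.mpr hfg_i))

theorem Function.Periodic.exists_forall_apply_le {α : Type*} [LinearOrder α] {f : ℤ → α}
    {c : ℤ} (hf : Periodic f c) (hc : 0 < c) : ∃ i, ∀ j, f j ≤ f i := by
  obtain ⟨i, -, hi⟩ := (Finset.Ico 0 c).exists_max_image f (by simpa using hc)
  refine ⟨i, fun j => ?_⟩
  obtain ⟨k, hk, hjk⟩ := hf.exists_mem_Ico₀ hc j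
  exact hjk ▸ hi k (by simpa using hk)

theorem Function.Periodic.exists_mem_Icc_eq {α : Type*} {f : ℤ → α} {c : ℤ}
    (hf : Periodic f c) (hc : 0 < c) {a b : ℤ} (hab : c ≤ b - a + 1) (j : ℤ) :
    ∃ i ∈ Finset.Icc a b, f i = f j := by
  obtain ⟨i, hi, hji⟩ := hf.exists_mem_Ico hc j a
  exact ⟨i, by simp only [Set.mem_Ico] at hi; simp only [Finset.mem_Icc]; omega, hji.symm⟩

theorem mul_abs_le_abs_add_add {a b d u v w : ℝ} (ha : 0 ≤ a) (hb : 0 ≤ b) (hw : |w| ≤ |v|)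
    (hu : |u| ≤ |v|) : (d - a - b) * |v| ≤ |a * w + d * v + b * u| := by
  have hw' : |a * w| ≤ a * |v| := by
    rw [abs_mul, abs_of_nonneg ha]; exact mul_le_mul_of_nonneg_left hw ha
  have hu' : |b * u| ≤ b * |v| := by
    rw [abs_mul, abs_of_nonneg hb]; exact mul_le_mul_of_nonneg_left hu hb
  have hd : d * |v| ≤ |d * v| := by
    rw [abs_mul]; exact mul_le_mul_of_nonneg_right (le_abs_self d) (abs_nonneg v)
  have htri := abs_add_three (a * w + d * v + b * u) (-(a * w)) (-(b * u))
  rw [abs_neg, abs_neg, show a * w + d * v + b * u + -(a * w) + -(b * u) = d * v by ring] at htri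
  linarith

def symmTridiag (A D : ℤ → ℝ) : (ℤ → ℝ) →ₗ[ℝ] (ℤ → ℝ) where
  toFun x j := A j * x (j - 1) + D j * x j + A (j + 1) * x (j + 1)
  map_add' x y := by ext j; simp only [Pi.add_apply]; ring
  map_smul' a x := by ext j; simp only [Pi.smul_apply, smul_eq_mul, RingHom.id_apply]; ring

@[simp]
theorem symmTridiag_apply (A D x : ℤ → ℝ) (j : ℤ) :
    symmTridiag A D x j = A j * x (j - 1) + D j * x j + A (j + 1) * x (j + 1) := rfl

namespace symmTridiag

variable {A D x : ℤ → ℝ}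

theorem periodic {c : ℤ} (hA : Periodic A c) (hD : Periodic D c) (hx : Periodic x c) :
    Periodic (symmTridiag A D x) c := fun j => by
  simp only [symmTridiag_apply, add_sub_right_comm j c, add_right_comm j c, hA j, hA (j + 1),
    hD j, hx j, hx (j - 1), hx (j + 1)]

theorem mul_abs_le_abs_apply (hA : ∀ j, 0 ≤ A j) {i : ℤ} (hi : ∀ j, |x j| ≤ |x i|) :
    (D i - A i - A (i + 1)) * |x i| ≤ |symmTridiag A D x i| :=
  mul_abs_le_abs_add_add (hA i) (hA (i + 1)) (hi (i - 1)) (hi (i + 1))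

theorem mul_abs_le_sup'_abs {μ : ℝ} (hμ : 0 ≤ μ) (hA : ∀ j, 0 ≤ A j)
    (hdom : ∀ j, μ ≤ D j - A j - A (j + 1)) {s : Finset ℤ} (hs : s.Nonempty)
    (hx : ∀ j, ∃ i ∈ s, x i = x j) (j : ℤ) :
    μ * |x j| ≤ s.sup' hs fun i => |symmTridiag A D x i| := by
  obtain ⟨i, his, hi⟩ := s.exists_max_image (|x ·|) hs
  have hmax : ∀ k, |x k| ≤ |x i| := fun k => by
    obtain ⟨l, hls, hlk⟩ := hx k
    exact hlk ▸ hi l hls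
  calc μ * |x j| ≤ (D i - A i - A (i + 1)) * |x i| :=
        mul_le_mul (hdom i) (hmax j) (abs_nonneg _) (hμ.trans (hdom i))
    _ ≤ |symmTridiag A D x i| := mul_abs_le_abs_apply hA hmax
    _ ≤ _ := s.le_sup' (fun i => |symmTridiag A D x i|) his

theorem eq_zero_of_periodic {c : ℤ} (hc : 0 < c) (hA : ∀ j, 0 ≤ A j)
    (hdom : ∀ j, 0 < D j - A j - A (j + 1)) (hx : Periodic x c) (h : symmTridiag A D x = 0) :
    x = 0 := by
  obtain ⟨i, hi⟩ := (hx.comp (|·|)).exists_forall_apply_le hc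
  have hxi : |x i| ≤ 0 := by
    have := mul_abs_le_abs_apply (D := D) hA hi
    rw [h, Pi.zero_apply, abs_zero] at this
    exact nonpos_of_mul_nonpos_right this (hdom i)
  exact funext fun j => abs_nonpos_iff.mp ((hi j).trans hxi)

theorem existsUnique_periodic_eq {c : ℤ} (hc : 0 < c) (hA : Periodic A c) (hD : Periodic D c)
    (hA0 : ∀ j, 0 ≤ A j) (hdom : ∀ j, 0 < D j - A j - A (j + 1)) {g : ℤ → ℝ}
    (hg : Periodic g c) : ∃! x, Periodic x c ∧ symmTridiag A D x = g := by
  have := finiteDimensional_periodicSubmodule ℝ hc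
  let T := (symmTridiag A D).restrict (p := periodicSubmodule ℝ c) (q := periodicSubmodule ℝ c)
    fun x hx => periodic hA hD hx
  have hinj : Injective T := by
    refine (injective_iff_map_eq_zero T).mpr fun x hx => Subtype.ext ?_
    exact eq_zero_of_periodic hc hA0 hdom x.2 (congrArg Subtype.val hx)
  obtain ⟨x, hx⟩ := LinearMap.injective_iff_surjective.mp hinj ⟨g, hg⟩
  refine ⟨x, ⟨x.2, congrArg Subtype.val hx⟩, fun y ⟨hy, hTy⟩ => ?_⟩
  exact congrArg Subtype.val
    (hinj (a₁ := ⟨y, hy⟩) (Subtype.ext (hTy.trans (congrArg Subtype.val hx).symm)))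

end symmTridiag

-- For element sizes `h`: `clusterOffDiag r ε h j = M_{j,j-1} = M_{j-1,j}` and
-- `clusterDiag r ε h j = M_{jj}`.
noncomputable def clusterOffDiag (r ε : ℝ) (h : ℤ → ℝ) (j : ℤ) : ℝ :=
  r * (r + 1) / 2 * ε / h j

noncomputable def clusterDiag (r ε : ℝ) (h : ℤ → ℝ) (j : ℤ) : ℝ :=
  (2 * r + 1) - r * (r + 1) / 2 * ε * (1 / h j + 1 / h (j + 1))

theorem lt_clusterDiag_sub_clusterOffDiag {r ε : ℝ} {h : ℤ → ℝ} (hr : 0 ≤ r) (hε : 0 < ε)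
    (hnov : ∀ j, (2 * r + 1) * ε ≤ h j) (j : ℤ) :
    r < clusterDiag r ε h j - clusterOffDiag r ε h j - clusterOffDiag r ε h (j + 1) := by
  have h2r : 0 < 2 * r + 1 := by linarith
  have hratio : ∀ k, ε / h k ≤ 1 / (2 * r + 1) := fun k => by
    rw [div_le_div_iff₀ (by nlinarith [hnov k]) h2r]
    linarith [hnov k]
  have hsum : r * (r + 1) * (ε / h j + ε / h (j + 1)) ≤
      r * (r + 1) * (1 / (2 * r + 1) + 1 / (2 * r + 1)) :=
    mul_le_mul_of_nonneg_left (add_le_add (hratio j) (hratio (j + 1))) (by positivity)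
  have hlt : r * (r + 1) * (1 / (2 * r + 1) + 1 / (2 * r + 1)) < r + 1 := by
    field_simp
    nlinarith
  calc r < 2 * r + 1 - r * (r + 1) * (ε / h j + ε / h (j + 1)) := by linarith
    _ = _ := by unfold clusterDiag clusterOffDiag; ring

/-- for non-overlapping clusters the periodic tridiagonal
exactness matrix `M` is strictly row-diagonally dominant with margin `> r`;
hence it is invertible on 2K-periodic sequences and `‖M⁻¹‖_{ℓ∞} ≤ 1/r` for
`r ≥ 1`, `‖M⁻¹‖_{ℓ∞} ≤ 1` for `r = 0`. -/
theorem statement16 (K : ℤ) (hK : 1 ≤ K) (r : ℕ) (ε : ℝ) (hε : 0 < ε)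
    (hsz : ℤ → ℝ) (hpos : ∀ k : ℤ, 0 < hsz k)
    (hper : ∀ k : ℤ, hsz (k + 2 * K) = hsz k)
    (hnov : ∀ j : ℤ, (2 * (r : ℝ) + 1) * ε ≤ hsz j)
    (M : (ℤ → ℝ) → ℤ → ℝ)
    (hM : ∀ (x : ℤ → ℝ) (j : ℤ), M x j =
      ((r : ℝ) * ((r : ℝ) + 1) / 2) * ε / hsz j * x (j - 1) +
      ((2 * (r : ℝ) + 1) -
        ((r : ℝ) * ((r : ℝ) + 1) / 2) * ε * (1 / hsz j + 1 / hsz (j + 1))) * x j +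
      ((r : ℝ) * ((r : ℝ) + 1) / 2) * ε / hsz (j + 1) * x (j + 1)) :
    (∀ j : ℤ,
      (r : ℝ) < ((2 * (r : ℝ) + 1) -
          ((r : ℝ) * ((r : ℝ) + 1) / 2) * ε * (1 / hsz j + 1 / hsz (j + 1))) -
        (|((r : ℝ) * ((r : ℝ) + 1) / 2) * ε / hsz j| +
          |((r : ℝ) * ((r : ℝ) + 1) / 2) * ε / hsz (j + 1)|)) ∧
    (∀ g : ℤ → ℝ, (∀ k : ℤ, g (k + 2 * K) = g k) →
      ∃! x : ℤ → ℝ, (∀ k : ℤ, x (k + 2 * K) = x k) ∧ ∀ j : ℤ, M x j = g j) ∧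
    (1 ≤ r → ∀ x : ℤ → ℝ, (∀ k : ℤ, x (k + 2 * K) = x k) → ∀ j : ℤ,
      |x j| ≤ (1 / (r : ℝ)) *
        (Finset.Icc (-K + 1) K).sup' (Finset.nonempty_Icc.mpr (by omega))
          (fun i => |M x i|)) ∧
    (r = 0 → ∀ x : ℤ → ℝ, (∀ k : ℤ, x (k + 2 * K) = x k) → ∀ j : ℤ,
      |x j| ≤
        (Finset.Icc (-K + 1) K).sup' (Finset.nonempty_Icc.mpr (by omega))
          (fun i => |M x i|)) := by
  set A := clusterOffDiag r ε hsz
  set D := clusterDiag r ε hsz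
  have hMA : ∀ x, M x = symmTridiag A D x := fun x => funext (hM x)
  have hA0 : ∀ j, 0 ≤ A j := fun j => div_nonneg (by positivity) (hpos j).le
  have hdom : ∀ j, (r : ℝ) < D j - A j - A (j + 1) :=
    lt_clusterDiag_sub_clusterOffDiag r.cast_nonneg hε hnov
  have hAper : Periodic A (2 * K) := fun j => by simp only [A, clusterOffDiag, hper]
  have hDper : Periodic D (2 * K) := fun j => by
    simp only [D, clusterDiag, add_right_comm j (2 * K), hper]
  have hwin : ∀ x : ℤ → ℝ, Periodic x (2 * K) →
      ∀ j, ∃ i ∈ Finset.Icc (-K + 1) K, x i = x j :=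
    fun x hx => hx.exists_mem_Icc_eq (by omega) (by omega)
  refine ⟨fun j => ?_, fun g hg => ?_, fun hr x hx j => ?_, fun hr x hx j => ?_⟩
  · show (r : ℝ) < D j - (|A j| + |A (j + 1)|)
    rw [abs_of_nonneg (hA0 j), abs_of_nonneg (hA0 (j + 1)), ← sub_sub]
    exact hdom j
  · obtain ⟨x, ⟨hx, hTx⟩, huniq⟩ :=
      symmTridiag.existsUnique_periodic_eq (by omega) hAper hDper hA0
        (fun j => r.cast_nonneg.trans_lt (hdom j)) hg
    refine ⟨x, ⟨hx, fun j => by rw [hMA, hTx]⟩, fun y ⟨hy, hMy⟩ => huniq y ⟨hy, ?_⟩⟩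
    rw [← hMA]
    exact funext hMy
  · have hr0 : (0 : ℝ) < r := by exact_mod_cast hr
    rw [one_div, ← div_eq_inv_mul, le_div_iff₀ hr0, mul_comm, hMA]
    exact symmTridiag.mul_abs_le_sup'_abs hr0.le hA0 (fun j => (hdom j).le) _ (hwin x hx) j
  · subst hr
    rw [hMA, ← one_mul |x j|]
    refine symmTridiag.mul_abs_le_sup'_abs zero_le_one hA0 (fun j => ?_) _ (hwin x hx) j
    simp [A, D, clusterDiag, clusterOffDiag]
end

section
/- Let r ≥ 0 be an integer, ε > 0, and let (h_j) be 2K-periodic positive element sizes with h_j ≥ (2r+1)ε for all j. Define the lumped weights ω̄_j = (h_j + h_{j+1})/(2(2r+1)), the right-hand side g_j = ½(h_j + h_{j+1}), and the residual ρ_j = (M ω̄)_j − g_j, where M is the 2K-periodic tridiagonal exactness matrix. Then ρ_j = (ω̄_{j−1} − ω̄_j) · ½ r(r+1) ε/h_j + (ω̄_{j+1} − ω̄_j) · ½ r(r+1) ε/h_{j+1} for every j; ρ = 0 if the mesh is uniform or if r = 0; and if the mesh is κ-regular for some κ ≥ 1, then there is a constant C depending only on κ such that max_j |ρ_j| ≤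 C ε r. -/
/-!
Because `(2r+1) ω̄_j = g_j`, the diagonal part `(2r+1) ω̄_j` of `M ω̄` cancels `g_j`, and what is left
is the off-diagonal coupling `½ r(r+1) ε / h` applied to differences of neighbouring lumped weights.
Those differences are `(h_{j-1} - h_{j+1}) / (2(2r+1))`; on a κ-regular mesh both sizes are at most
`κ h_j`, so each of the two terms is at most `κ ε r (r+1) / (4(2r+1)) ≤ κ ε r / 4`.
-/

lemma tridiag_row_sub_eq (c s h h' a b d g : ℝ) :
    c / h * a + (s - c * (1 / h + 1 / h')) * b + c / h' * d - g =
      (a - b) * (c / h) + (d - b) * (c / h') + (s * b - g) := by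
  ring

lemma abs_sub_div_mul_coupling_le {κ ε x y h : ℝ} (r : ℕ) (hε : 0 ≤ ε) (hh : 0 < h)
    (hx : 0 ≤ x) (hy : 0 ≤ y) (hxh : x ≤ κ * h) (hyh : y ≤ κ * h) :
    |(x - y) / (2 * (2 * (r : ℝ) + 1)) * ((r : ℝ) * ((r : ℝ) + 1) / 2 * ε / h)| ≤
      κ / 4 * ε * r := by
  have hκ : 0 ≤ κ := nonneg_of_mul_nonneg_left (hx.trans hxh) hh
  have hxy : |x - y| ≤ κ * h := abs_sub_le_of_nonneg_of_le hx hxh hy hyh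
  have hcoef : (r : ℝ) * ((r : ℝ) + 1) / (4 * (2 * r + 1)) ≤ r / 4 := by
    rw [div_le_div_iff₀ (by positivity) (by norm_num)]
    nlinarith [(r.cast_nonneg : (0 : ℝ) ≤ r)]
  calc |(x - y) / (2 * (2 * (r : ℝ) + 1)) * ((r : ℝ) * ((r : ℝ) + 1) / 2 * ε / h)|
      = |x - y| / h * (ε * ((r : ℝ) * ((r : ℝ) + 1) / (4 * (2 * r + 1)))) := by
        rw [abs_mul, abs_div, abs_of_pos (by positivity : (0 : ℝ) < 2 * (2 * r + 1)),
          abs_of_nonneg (by positivity : (0 : ℝ) ≤ r * (r + 1) / 2 * ε / h)]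
        field_simp
        ring
    _ ≤ κ * (ε * (r / 4)) := by
        gcongr
        exact (div_le_iff₀ hh).mpr hxy
    _ = κ / 4 * ε * r := by ring

/-- the residual `ρ = M ω̄ − g` of the mass-lumped weights
satisfies the explicit formula
`ρ_j = (ω̄_{j−1} − ω̄_j)·½r(r+1)ε/h_j + (ω̄_{j+1} − ω̄_j)·½r(r+1)ε/h_{j+1}`,
vanishes for uniform meshes or `r = 0`, and on κ-regular meshes satisfies
`max_j |ρ_j| ≤ C ε r` with `C` depending only on `κ`. -/
theorem statement17 (κ : ℝ) (hκ : 1 ≤ κ) :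
    ∃ C : ℝ, 0 < C ∧
      ∀ (K : ℤ), 1 ≤ K → ∀ (r : ℕ) (ε : ℝ), 0 < ε →
      ∀ hsz : ℤ → ℝ, (∀ k : ℤ, 0 < hsz k) → (∀ k : ℤ, hsz (k + 2 * K) = hsz k) →
        (∀ j : ℤ, (2 * (r : ℝ) + 1) * ε ≤ hsz j) →
      ∀ ωb g ρ : ℤ → ℝ,
        (∀ j : ℤ, ωb j = (hsz j + hsz (j + 1)) / (2 * (2 * (r : ℝ) + 1))) →
        (∀ j : ℤ, g j = (hsz j + hsz (j + 1)) / 2) →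
        -- `ρ = M ω̄ − g` for the periodic tridiagonal exactness matrix `M`
        (∀ j : ℤ, ρ j =
          (((r : ℝ) * ((r : ℝ) + 1) / 2) * ε / hsz j * ωb (j - 1) +
            ((2 * (r : ℝ) + 1) -
              ((r : ℝ) * ((r : ℝ) + 1) / 2) * ε * (1 / hsz j + 1 / hsz (j + 1))) * ωb j +
            ((r : ℝ) * ((r : ℝ) + 1) / 2) * ε / hsz (j + 1) * ωb (j + 1)) - g j) →
        ((∀ j : ℤ, ρ j =
            (ωb (j - 1) - ωb j) * (((r : ℝ) * ((r : ℝ) + 1) / 2) * ε / hsz j) +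
            (ωb (j + 1) - ωb j) * (((r : ℝ) * ((r : ℝ) + 1) / 2) * ε / hsz (j + 1))) ∧
          ((∀ i j : ℤ, hsz i = hsz j) → ∀ j : ℤ, ρ j = 0) ∧
          (r = 0 → ∀ j : ℤ, ρ j = 0) ∧
          ((∀ k : ℤ, κ⁻¹ * hsz (k - 1) ≤ hsz k ∧ hsz k ≤ κ * hsz (k - 1)) →
            ∀ j : ℤ, |ρ j| ≤ C * ε * (r : ℝ))) := by
  have hκ0 : 0 < κ := one_pos.trans_le hκ
  refine ⟨κ / 2, half_pos hκ0, ?_⟩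
  intro K _ r ε hε hsz hpos _ _ ωb g ρ hω hg hρ
  have hlumped : ∀ j, (2 * (r : ℝ) + 1) * ωb j = g j := fun j => by
    rw [hω, hg]; field_simp
  have hformula : ∀ j, ρ j =
      (ωb (j - 1) - ωb j) * ((r : ℝ) * ((r : ℝ) + 1) / 2 * ε / hsz j) +
      (ωb (j + 1) - ωb j) * ((r : ℝ) * ((r : ℝ) + 1) / 2 * ε / hsz (j + 1)) := fun j => by
    rw [hρ, tridiag_row_sub_eq, hlumped, sub_self, add_zero]
  refine ⟨hformula, fun huni j => ?_, fun hr j => ?_, fun hreg j => ?_⟩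
  · have hconst : ∀ i, ωb i = ωb j := fun i => by
      rw [hω, hω, huni i j, huni (i + 1) (j + 1)]
    rw [hformula, hconst (j - 1), hconst (j + 1)]
    ring
  · simp [hformula, hr]
  · have hdown : ∀ k, hsz (k - 1) ≤ κ * hsz k := fun k => (inv_mul_le_iff₀ hκ0).mp (hreg k).1
    have hup : ∀ k, hsz (k + 1) ≤ κ * hsz k := fun k => by
      simpa using (hreg (k + 1)).2
    have hleft : ωb (j - 1) - ωb j = (hsz (j - 1) - hsz (j + 1)) / (2 * (2 * (r : ℝ) + 1)) := by
      rw [hω, hω, sub_add_cancel]; ring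
    have hright : ωb (j + 1) - ωb j = (hsz (j + 1 + 1) - hsz j) / (2 * (2 * (r : ℝ) + 1)) := by
      rw [hω, hω]; ring
    rw [hformula, hleft, hright]
    calc _ ≤ _ := abs_add_le _ _
      _ ≤ κ / 4 * ε * r + κ / 4 * ε * r := add_le_add
          (abs_sub_div_mul_coupling_le r hε.le (hpos j) (hpos _).le (hpos _).le
            (hdown j) (hup j))
          (abs_sub_div_mul_coupling_le r hε.le (hpos _) (hpos _).le (hpos _).le
            (hup (j + 1)) (by simpa using hdown (j + 1)))
      _ = κ / 2 * ε * r := by ring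
end

section
/- Let r ≥ 0 be an integer, ε > 0, and let (h_j) be 2K-periodic positive element sizes with h_j ≥ (2r+1)ε for all j and κ-regular for some κ ≥ 1. Let ω = (ω_j) be the unique solution of M ω = g, where M is the 2K-periodic tridiagonal exactness matrix and g_j = ½(h_j + h_{j+1}), and let ω̄_j = (h_j + h_{j+1})/(2(2r+1)) be the lumped weights. Then there is a constant C depending only on κ such that max_j |ω_j − ω̄_j| ≤ C ε if r ≥ 1, and ω_j = ω̄_j for all j if r = 0; i.e. the exact cluster-summation weights differ from the mass-lumped weights by at most O(ε). -/
/-!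
The error `e = ω - ω̄` solves `M e = -f`, where the residual of the lumped weights is
`f_j = c / (2(2r+1)) · (d_j - d_{j+1})` with `c = r(r+1)ε/2` and `d_j = (h_{j-1} - h_{j+1}) / h_j`;
κ-regularity gives `|d_j| ≤ κ`. By periodicity `|e|` attains its maximum at some `j`, and since
row `j` of `M` is diagonally dominant with margin `r`, there `r |e_j| ≤ |f_j| ≤ κ r(r+1)ε / (2r+1)`,
whence `|e| ≤ κ ε`. For `r = 0` the matrix `M` is the identity and `g = ω̄`.
-/

open Function

theorem Function.Periodic.exists_forall_le_int {α : Type*} [LinearOrder α] {f : ℤ → α} {p : ℤ}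
    (hf : Periodic f p) (hp : 0 < p) : ∃ j, ∀ i, f i ≤ f j := by
  obtain ⟨j, -, hj⟩ := (Finset.Ico 0 p).exists_max_image f ⟨0, by simpa⟩
  refine ⟨j, fun i => ?_⟩
  obtain ⟨y, hy, hfy⟩ := hf.exists_mem_Ico₀ hp i
  exact hfy ▸ hj y (by simpa using hy)

/-- The maximum principle for one row of a tridiagonal system, at an entry of maximal modulus. -/
theorem sub_abs_mul_abs_le_of_row {A D B x y z F : ℝ} (hrow : A * x + D * y + B * z = F)
    (hx : |x| ≤ |y|) (hz : |z| ≤ |y|) : (|D| - |A| - |B|) * |y| ≤ |F| := by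
  have hAx : |A * x| ≤ |A| * |y| := by
    rw [abs_mul]; exact mul_le_mul_of_nonneg_left hx (abs_nonneg A)
  have hBz : |B * z| ≤ |B| * |y| := by
    rw [abs_mul]; exact mul_le_mul_of_nonneg_left hz (abs_nonneg B)
  have hDy : |D * y| ≤ |F| + |A * x| + |B * z| := calc
    |D * y| = |F + -(A * x) + -(B * z)| := by rw [← hrow]; ring_nf
    _ ≤ |F| + |A * x| + |B * z| := by simpa only [abs_neg] using abs_add_three F (-(A * x)) (-(B * z))
  rw [abs_mul] at hDy
  linarith

theorem coupling_div_le {r ε h : ℝ} (hr : 0 ≤ r) (hε : 0 < ε) (hh : (2 * r + 1) * ε ≤ h) :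
    r * (r + 1) / 2 * ε / h ≤ (r + 1) / 4 := by
  have hpos : 0 < h := lt_of_lt_of_le (by positivity : 0 < (2 * r + 1) * ε) hh
  rw [div_le_iff₀ hpos]
  nlinarith [mul_le_mul_of_nonneg_left hh (by positivity : (0 : ℝ) ≤ (r + 1) / 4)]

theorem abs_sub_div_le_of_regular {κ : ℝ} {h : ℤ → ℝ} (hκ : 0 < κ) (hpos : ∀ k, 0 < h k)
    (hreg : ∀ k, κ⁻¹ * h (k - 1) ≤ h k ∧ h k ≤ κ * h (k - 1)) (j : ℤ) :
    |(h (j - 1) - h (j + 1)) / h j| ≤ κ := by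
  have hprev : h (j - 1) ≤ κ * h j := (inv_mul_le_iff₀ hκ).1 (hreg j).1
  have hnext : h (j + 1) ≤ κ * h j := by simpa using (hreg (j + 1)).2
  rw [abs_div, abs_of_pos (hpos j), div_le_iff₀ (hpos j)]
  exact abs_sub_le_of_nonneg_of_le (hpos _).le hprev (hpos _).le hnext

theorem lumped_error_row {m c : ℝ} {h ω ωb : ℤ → ℝ} (hm : m ≠ 0) (hpos : ∀ k, 0 < h k)
    (hωb : ∀ k, ωb k = (h k + h (k + 1)) / (2 * m)) (j : ℤ)
    (hrow : c / h j * ω (j - 1) + (m - c * (1 / h j + 1 / h (j + 1))) * ω j +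
      c / h (j + 1) * ω (j + 1) = (h j + h (j + 1)) / 2) :
    c / h j * (ω (j - 1) - ωb (j - 1)) + (m - c * (1 / h j + 1 / h (j + 1))) * (ω j - ωb j) +
        c / h (j + 1) * (ω (j + 1) - ωb (j + 1)) =
      -(c / (2 * m)) * ((h (j - 1) - h (j + 1)) / h j - (h (j + 1 - 1) - h (j + 1 + 1)) / h (j + 1)) := by
  have hj := (hpos j).ne'
  have hj' := (hpos (j + 1)).ne'
  rw [hωb, hωb, hωb, sub_add_cancel, add_sub_cancel_right]
  linear_combination (norm := skip) hrow
  field_simp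
  ring

theorem abs_exact_sub_lumped_le {r κ ε : ℝ} {h ω ωb : ℤ → ℝ} (hr : 1 ≤ r) (hκ : 0 < κ)
    (hε : 0 < ε) (hpos : ∀ k, 0 < h k) (hsize : ∀ k, (2 * r + 1) * ε ≤ h k)
    (hreg : ∀ k, κ⁻¹ * h (k - 1) ≤ h k ∧ h k ≤ κ * h (k - 1))
    (hM : ∀ k, r * (r + 1) / 2 * ε / h k * ω (k - 1) +
      ((2 * r + 1) - r * (r + 1) / 2 * ε * (1 / h k + 1 / h (k + 1))) * ω k +
      r * (r + 1) / 2 * ε / h (k + 1) * ω (k + 1) = (h k + h (k + 1)) / 2)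
    (hωb : ∀ k, ωb k = (h k + h (k + 1)) / (2 * (2 * r + 1))) {j : ℤ}
    (hmax : ∀ i, |ω i - ωb i| ≤ |ω j - ωb j|) : |ω j - ωb j| ≤ κ * ε := by
  set c := r * (r + 1) / 2 * ε with hc
  have hm : 0 < 2 * r + 1 := by linarith
  have hc0 : 0 ≤ c := by positivity
  have hdom := sub_abs_mul_abs_le_of_row (lumped_error_row hm.ne' hpos hωb j (hM j))
    (hmax _) (hmax _)
  have hcj := coupling_div_le (by linarith) hε (hsize j)
  have hcj₁ := coupling_div_le (by linarith) hε (hsize (j + 1))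
  have hA0 : 0 ≤ c / h j := div_nonneg hc0 (hpos j).le
  have hB0 : 0 ≤ c / h (j + 1) := div_nonneg hc0 (hpos _).le
  have hmargin : r ≤ |2 * r + 1 - c * (1 / h j + 1 / h (j + 1))| - |c / h j| - |c / h (j + 1)| := by
    rw [abs_of_nonneg hA0, abs_of_nonneg hB0]
    refine le_trans ?_ (sub_le_sub_right (sub_le_sub_right (le_abs_self _) _) _)
    rw [mul_add, mul_one_div, mul_one_div]
    linarith
  have hresidual : |-(c / (2 * (2 * r + 1))) * ((h (j - 1) - h (j + 1)) / h j -
      (h (j + 1 - 1) - h (j + 1 + 1)) / h (j + 1))| ≤ c / (2 * (2 * r + 1)) * (κ + κ) := by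
    rw [abs_mul, abs_neg, abs_of_nonneg (by positivity)]
    gcongr
    exact (abs_sub _ _).trans (add_le_add (abs_sub_div_le_of_regular hκ hpos hreg j)
      (abs_sub_div_le_of_regular hκ hpos hreg (j + 1)))
  have hbound : r * |ω j - ωb j| ≤ c / (2 * (2 * r + 1)) * (κ + κ) :=
    (mul_le_mul_of_nonneg_right hmargin (abs_nonneg _)).trans (hdom.trans hresidual)
  rw [div_mul_eq_mul_div, le_div_iff₀ (by positivity), hc] at hbound
  have hscaled : r * (2 * (2 * r + 1)) * |ω j - ωb j| ≤ r * (2 * (2 * r + 1)) * (κ * ε) := by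
    nlinarith [mul_nonneg (mul_nonneg (by linarith : 0 ≤ r) (by positivity : 0 ≤ κ * ε))
      (by linarith : (0 : ℝ) ≤ 3 * r + 1)]
  exact le_of_mul_le_mul_left hscaled (by positivity)

/-- on κ-regular meshes with non-overlapping clusters, the exact
cluster-summation weights `ω` (solving `M ω = g`) differ from the mass-lumped
weights `ω̄_j = (h_j + h_{j+1})/(2(2r+1))` by at most `C ε` (with `C` depending
only on `κ`) if `r ≥ 1`, and coincide with them if `r = 0`. -/
theorem statement18 (κ : ℝ) (hκ : 1 ≤ κ) :
    ∃ C : ℝ, 0 < C ∧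
      ∀ (K : ℤ), 1 ≤ K → ∀ (r : ℕ) (ε : ℝ), 0 < ε →
      ∀ hsz : ℤ → ℝ, (∀ k : ℤ, 0 < hsz k) → (∀ k : ℤ, hsz (k + 2 * K) = hsz k) →
        (∀ j : ℤ, (2 * (r : ℝ) + 1) * ε ≤ hsz j) →
        (∀ k : ℤ, κ⁻¹ * hsz (k - 1) ≤ hsz k ∧ hsz k ≤ κ * hsz (k - 1)) →
      ∀ ω ωb : ℤ → ℝ,
        (∀ k : ℤ, ω (k + 2 * K) = ω k) →
        -- `ω` solves the exactness system `M ω = g`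
        (∀ j : ℤ,
          ((r : ℝ) * ((r : ℝ) + 1) / 2) * ε / hsz j * ω (j - 1) +
            ((2 * (r : ℝ) + 1) -
              ((r : ℝ) * ((r : ℝ) + 1) / 2) * ε * (1 / hsz j + 1 / hsz (j + 1))) * ω j +
            ((r : ℝ) * ((r : ℝ) + 1) / 2) * ε / hsz (j + 1) * ω (j + 1) =
          (hsz j + hsz (j + 1)) / 2) →
        (∀ j : ℤ, ωb j = (hsz j + hsz (j + 1)) / (2 * (2 * (r : ℝ) + 1))) →
        ((1 ≤ r → ∀ j : ℤ, |ω j - ωb j| ≤ C * ε) ∧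
          (r = 0 → ∀ j : ℤ, ω j = ωb j)) := by
  have hκ0 : 0 < κ := by linarith
  refine ⟨κ, hκ0, fun K hK r ε hε h hpos hper hsize hreg ω ωb hωper hM hωb => ⟨?_, ?_⟩⟩
  · intro hr j
    have hωbper : Periodic ωb (2 * K) := fun k => by
      rw [hωb, hωb, hper, add_right_comm, hper]
    obtain ⟨j₀, hmax⟩ := ((Periodic.sub hωper hωbper).comp abs).exists_forall_le_int (by omega)
    exact (hmax j).trans
      (abs_exact_sub_lumped_le (by exact_mod_cast hr) hκ0 hε hpos hsize hreg hM hωb hmax)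
  · rintro rfl j
    have hrow := hM j
    rw [hωb]
    norm_num at hrow ⊢
    linarith
end

section
/- Assume the harmonic potential φ(t) = t²/2 and the exponentially graded mesh: K ≥ 3, N = 2^{K−1}, ε = 1/N, ℓ_0 = 0, ℓ_k = sgn(k)·2^{|k|−1} for k = −K+1, …, K, extended periodically. Then the variational crime of the node-based (non-local QC) energy admits the lower bound: for every v_h ∈ X_h whose gradient vanishes outside the two innermost elements (i.e. V'_k = 0 for k ∉ {0, 1}), one has ρ(v_h)² = Σ_{k=−K+1}^K h_k (ω̂_k V'_k − a)² = 2a² with a = ½ Σ_k h_k ω̂_k V'_k = 0 (since ω̂_0 = ω̂_1 = 0), while for every v_h ∈ X_h whose gradient vanishes outside the four innermost elements k ∈ {−1, 0, 1, 2} and satisfies V'_{−1} = V'_0 and V'_1 = V'_2, one has ρ(v_h)² ≥ (1/16)² Σ_{k∈{−1,0,1,2}} h_k (V'_k)² − 2a², where a = ½ Σ_k h_k ω̂_k V'_k and ω̂_k are the graded-mesh coefficients (ω̂_0 = ω̂_1 = 0, ω̂_{−1} = ω̂_2 = 1/4). -/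
/-- `v : ℤ → ℝ` belongs to the coarse space `X_h`. -/
def IsCoarse (N : ℤ) (ε : ℝ) (L : ℤ → ℤ) (v : ℤ → ℝ) : Prop :=
  (∀ l : ℤ, v (l + 2 * N) = v l) ∧ v 0 = 0 ∧
    ∀ k l : ℤ, L (k - 1) ≤ l → l ≤ L k →
      v l = v (L (k - 1)) +
        ε * ((l - L (k - 1) : ℤ) : ℝ) *
          ((v (L k) - v (L (k - 1))) / (ε * ((L k - L (k - 1) : ℤ) : ℝ)))

private lemma telescope19 (g : ℤ → ℝ) (a : ℤ) : ∀ b : ℤ, a ≤ b →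
    ∑ k ∈ Finset.Icc (a + 1) b, (g k - g (k - 1)) = g b - g a := by
  refine Int.le_induction ?_ ?_
  · simp
  · intro n hn ih
    have hins : Finset.Icc (a + 1) (n + 1) = insert (n + 1) (Finset.Icc (a + 1) n) := by
      ext x; simp only [Finset.mem_Icc, Finset.mem_insert]; omega
    rw [hins, Finset.sum_insert (by simp only [Finset.mem_Icc]; omega), ih]
    have : (n + 1 - 1 : ℤ) = n := by ring
    rw [this]; ring

private lemma sumS19 (f : ℤ → ℝ) :
    ∑ k ∈ ({-1, 0, 1, 2} : Finset ℤ), f k = f (-1) + f 0 + f 1 + f 2 := by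
  rw [show ({-1, 0, 1, 2} : Finset ℤ) = insert (-1) (insert 0 (insert 1 {2})) from rfl]
  rw [Finset.sum_insert (by decide), Finset.sum_insert (by decide),
    Finset.sum_insert (by decide), Finset.sum_singleton]
  ring

/-- variational-crime bounds on the exponentially graded mesh:
for displacements supported (in gradient) on the two innermost elements,
`a = 0` and `ρ² = 2a²`; for displacements supported on the four innermost
elements with `V'_{−1} = V'_0`, `V'_1 = V'_2`, one has
`ρ² ≥ (1/16)² Σ_{k∈{−1,0,1,2}} h_k (V'_k)² − 2a²`. -/
theorem statement19 (K : ℕ) (hK : 3 ≤ K)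
    (N : ℤ) (hN : N = 2 ^ (K - 1))
    (ε : ℝ) (hε : ε = (N : ℝ)⁻¹)
    (L : ℤ → ℤ)
    (hwin : ∀ k : ℤ, -(K : ℤ) + 1 ≤ k → k ≤ (K : ℤ) →
      L k = k.sign * 2 ^ (k.natAbs - 1))
    (hper : ∀ k : ℤ, L (k + 2 * (K : ℤ)) = L k + 2 * N)
    (hsz : ℤ → ℝ) (hhsz : ∀ k : ℤ, hsz k = ε * ((L k - L (k - 1) : ℤ) : ℝ))
    (oh : ℤ → ℝ)
    (hoh : ∀ k : ℤ, oh k = (hsz (k - 1) - 2 * hsz k + hsz (k + 1)) / (4 * hsz k)) :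
    (∀ v : ℤ → ℝ, IsCoarse N ε L v →
      ∀ Vp : ℤ → ℝ, (∀ k : ℤ, Vp k = (v (L k) - v (L (k - 1))) / hsz k) →
      (∀ k ∈ Finset.Icc (-(K : ℤ) + 1) (K : ℤ), k ≠ 0 → k ≠ 1 → Vp k = 0) →
      ∀ a : ℝ,
        a = (1 / 2) * ∑ k ∈ Finset.Icc (-(K : ℤ) + 1) (K : ℤ),
          hsz k * (oh k * Vp k) →
        a = 0 ∧
          ∑ k ∈ Finset.Icc (-(K : ℤ) + 1) (K : ℤ),
            hsz k * (oh k * Vp k - a) ^ 2 = 2 * a ^ 2) ∧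
    (∀ v : ℤ → ℝ, IsCoarse N ε L v →
      ∀ Vp : ℤ → ℝ, (∀ k : ℤ, Vp k = (v (L k) - v (L (k - 1))) / hsz k) →
      (∀ k ∈ Finset.Icc (-(K : ℤ) + 1) (K : ℤ),
        k ∉ ({-1, 0, 1, 2} : Finset ℤ) → Vp k = 0) →
      Vp (-1) = Vp 0 → Vp 1 = Vp 2 →
      ∀ a : ℝ,
        a = (1 / 2) * ∑ k ∈ Finset.Icc (-(K : ℤ) + 1) (K : ℤ),
          hsz k * (oh k * Vp k) →
        (1 / 16) ^ 2 * (∑ k ∈ ({-1, 0, 1, 2} : Finset ℤ), hsz k * Vp k ^ 2) -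
            2 * a ^ 2 ≤
          ∑ k ∈ Finset.Icc (-(K : ℤ) + 1) (K : ℤ),
            hsz k * (oh k * Vp k - a) ^ 2) := by
  have hK3 : (3:ℤ) ≤ (K:ℤ) := by exact_mod_cast hK
  have hNpos : (0:ℤ) < N := by rw [hN]; positivity
  have hNR : (0:ℝ) < (N:ℝ) := by exact_mod_cast hNpos
  have hεpos : (0:ℝ) < ε := by rw [hε]; positivity
  have hεN : ε * (N:ℝ) = 1 := by rw [hε]; field_simp
  -- L values
  have hL0 : L 0 = 0 := by rw [hwin 0 (by omega) (by omega)]; decide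
  have hL1 : L 1 = 1 := by rw [hwin 1 (by omega) (by omega)]; decide
  have hL2 : L 2 = 2 := by rw [hwin 2 (by omega) (by omega)]; decide
  have hL3 : L 3 = 4 := by rw [hwin 3 (by omega) (by omega)]; decide
  have hLm1 : L (-1) = -1 := by rw [hwin (-1) (by omega) (by omega)]; decide
  have hLm2 : L (-2) = -2 := by rw [hwin (-2) (by omega) (by omega)]; decide
  have hLm3 : L (-3) = -4 := by
    rcases (by omega : K = 3 ∨ 4 ≤ K) with h | h
    · have hp := hper (-3)
      rw [h] at hp
      norm_num at hp
      rw [hL3] at hp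
      have : N = 4 := by rw [hN, h]; decide
      omega
    · rw [hwin (-3) (by omega) (by omega)]; decide
  have hLK : L (K : ℤ) = N := by
    rw [hwin (K:ℤ) (by omega) le_rfl, hN]
    rw [Int.natAbs_natCast, Int.sign_eq_one_iff_pos.mpr (by omega)]
    ring
  have hLmK : L (-(K:ℤ)) = -N := by
    have hp := hper (-(K:ℤ))
    rw [show -(K:ℤ) + 2 * K = K by ring, hLK] at hp
    omega
  -- hsz values
  have hsm2 : hsz (-2) = 2 * ε := by
    rw [hhsz, show (-2:ℤ) - 1 = -3 by ring, hLm2, hLm3]; push_cast; ring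
  have hsm1 : hsz (-1) = ε := by
    rw [hhsz, show (-1:ℤ) - 1 = -2 by ring, hLm1, hLm2]; push_cast; ring
  have hs0 : hsz 0 = ε := by
    rw [hhsz, show (0:ℤ) - 1 = -1 by ring, hL0, hLm1]; push_cast; ring
  have hs1 : hsz 1 = ε := by
    rw [hhsz, show (1:ℤ) - 1 = 0 by ring, hL1, hL0]; push_cast; ring
  have hs2 : hsz 2 = ε := by
    rw [hhsz, show (2:ℤ) - 1 = 1 by ring, hL2, hL1]; push_cast; ring
  have hs3 : hsz 3 = 2 * ε := by
    rw [hhsz, show (3:ℤ) - 1 = 2 by ring, hL3, hL2]; push_cast; ring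
  -- oh values
  have hεne : ε ≠ 0 := ne_of_gt hεpos
  have hoh0 : oh 0 = 0 := by
    rw [hoh, show (0:ℤ) - 1 = -1 by ring, show (0:ℤ) + 1 = 1 by ring,
      hsm1, hs0, hs1]
    field_simp
    ring
  have hoh1 : oh 1 = 0 := by
    rw [hoh, show (1:ℤ) - 1 = 0 by ring, show (1:ℤ) + 1 = 2 by ring,
      hs0, hs1, hs2]
    field_simp
    ring
  have hohm1 : oh (-1) = 1 / 4 := by
    rw [hoh, show (-1:ℤ) - 1 = -2 by ring, show (-1:ℤ) + 1 = 0 by ring,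
      hsm2, hsm1, hs0]
    field_simp; ring
  have hoh2 : oh 2 = 1 / 4 := by
    rw [hoh, show (2:ℤ) - 1 = 1 by ring, show (2:ℤ) + 1 = 3 by ring,
      hs1, hs2, hs3]
    field_simp; ring
  -- total mesh size
  have hsum2 : ∑ k ∈ Finset.Icc (-(K : ℤ) + 1) (K : ℤ), hsz k = 2 := by
    have tel := telescope19 (fun k => ε * ((L k : ℤ) : ℝ)) (-(K:ℤ)) (K:ℤ) (by omega)
    have hcongr : ∀ k ∈ Finset.Icc (-(K : ℤ) + 1) (K : ℤ),
        hsz k = (fun k => ε * ((L k : ℤ) : ℝ)) k - (fun k => ε * ((L k : ℤ) : ℝ)) (k - 1) := by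
      intro k _
      rw [hhsz]; push_cast; ring
    rw [Finset.sum_congr rfl hcongr, tel]
    simp only [hLK, hLmK]
    push_cast
    nlinarith [hεN]
  constructor
  · -- Part 1
    intro v _ Vp hVp hsupp a ha
    have hzero : ∀ k ∈ Finset.Icc (-(K : ℤ) + 1) (K : ℤ), hsz k * (oh k * Vp k) = 0 := by
      intro k hk
      rcases (by omega : k = 0 ∨ k = 1 ∨ (k ≠ 0 ∧ k ≠ 1)) with rfl | rfl | ⟨h0, h1⟩
      · rw [hoh0]; ring
      · rw [hoh1]; ring
      · rw [hsupp k hk h0 h1]; ring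
    have ha0 : a = 0 := by
      rw [ha, Finset.sum_eq_zero hzero]; ring
    refine ⟨ha0, ?_⟩
    rw [ha0]
    rw [Finset.sum_eq_zero ?_]
    · ring
    · intro k hk
      have := hzero k hk
      rcases mul_eq_zero.mp this with h | h
      · rw [h]; ring
      · rw [h]; ring
  · -- Part 2
    intro v _ Vp hVp hsupp hVm hV1 a ha
    set V := Vp 0 with hV
    set W := Vp 1 with hW
    have hVpm1 : Vp (-1) = V := hVm
    have hVp2 : Vp 2 = W := hV1.symm
    have hSsub : ({-1, 0, 1, 2} : Finset ℤ) ⊆ Finset.Icc (-(K : ℤ) + 1) (K : ℤ) := by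
      intro x hx
      simp only [Finset.mem_insert, Finset.mem_singleton] at hx
      simp only [Finset.mem_Icc]
      rcases hx with rfl | rfl | rfl | rfl <;> omega
    -- value of a
    have haval : a = ε / 8 * (V + W) := by
      rw [ha, ← Finset.sum_subset hSsub (by
        intro x hx hxS
        rw [hsupp x hx hxS]; ring)]
      rw [sumS19 (fun k => hsz k * (oh k * Vp k))]
      simp only [hohm1, hoh0, hoh1, hoh2, hsm1, hs0, hs1, hs2, hVpm1, hVp2]
      ring
    -- split the sum
    have hsplit : ∑ k ∈ Finset.Icc (-(K : ℤ) + 1) (K : ℤ), hsz k * (oh k * Vp k - a) ^ 2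
        = 2 * a ^ 2 + ∑ k ∈ ({-1, 0, 1, 2} : Finset ℤ),
            (hsz k * (oh k * Vp k - a) ^ 2 - hsz k * a ^ 2) := by
      have e1 : ∀ k ∈ Finset.Icc (-(K : ℤ) + 1) (K : ℤ),
          hsz k * (oh k * Vp k - a) ^ 2
            = hsz k * a ^ 2 + (hsz k * (oh k * Vp k - a) ^ 2 - hsz k * a ^ 2) := by
        intro k _; ring
      rw [Finset.sum_congr rfl e1, Finset.sum_add_distrib, ← Finset.sum_mul, hsum2]
      congr 1
      rw [← Finset.sum_subset hSsub (by
        intro x hx hxS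
        rw [hsupp x hx hxS]
        ring)]
    rw [hsplit, sumS19 (fun k => hsz k * (oh k * Vp k - a) ^ 2 - hsz k * a ^ 2),
      sumS19 (fun k => hsz k * Vp k ^ 2)]
    simp only [hohm1, hoh0, hoh1, hoh2, hsm1, hs0, hs1, hs2, hVpm1, hVp2]
    rw [haval]
    nlinarith [mul_nonneg hεpos.le (sq_nonneg V), mul_nonneg hεpos.le (sq_nonneg W)]
end
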